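/- arXiv:2202.04257 — 2 statements merged into one kernel-verified Lean document; each statement's English description precedes it below -/
import Mathlib

section
/- Let p(z) = z(z² − c²) with c > 0 and let T be a bounded operator on a Hilbert space with p(T) compact. If (λ_n) is a sequence of eigenvalues of T with λ_n → λ and λ_n pairwise distinct, then λ ∈ {0, c, −c}. -/
/-! The eigenvectors `v n` of `T` are eigenvectors of `K = T ^ 3 - c ^ 2 • T` with eigenvalues
`p (lam n)`, and they are linearly independent because the `lam n` are distinct. For a compact
operator, the eigenvalues along a linearly independent sequence of eigenvectors tend to `0`:
orthonormalising the eigenvectors by Gram–Schmidt gives unit vectors `u n` such that, for `n < m`,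
`K (u m) - K (u n)` is `μ m • u m` plus a vector orthogonal to `u m`. So if `‖μ n‖ ≥ ε` infinitely
often, the images of unit vectors under `K` would contain an `ε`-separated sequence, contradicting
compactness. Hence `p l = lim p (lam n) = 0`. -/

open Filter Topology Submodule InnerProductSpace

section EigenvectorSpan

variable {R M ι : Type*} [CommRing R] [AddCommGroup M] [Module R M]
  {f : Module.End R M} {v : ι → M} {μ : ι → R}

theorem span_image_le_comap_of_apply_eq_smul (hv : ∀ i, f (v i) = μ i • v i) (s : Set ι) :
    span R (v '' s) ≤ (span R (v '' s)).comap f := by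
  rw [span_le]
  rintro _ ⟨i, hi, rfl⟩
  rw [SetLike.mem_coe, Submodule.mem_comap, hv]
  exact smul_mem _ _ (subset_span ⟨i, hi, rfl⟩)

theorem apply_sub_smul_mem_span_image_of_mem_span_image_insert (hv : ∀ i, f (v i) = μ i • v i)
    {s : Set ι} {i : ι} {x : M} (hx : x ∈ span R (v '' insert i s)) :
    f x - μ i • x ∈ span R (v '' s) := by
  suffices span R (v '' insert i s) ≤ (span R (v '' s)).comap (f - μ i • 1) from this hx
  rw [span_le]
  rintro _ ⟨j, hj, rfl⟩
  rw [SetLike.mem_coe, Submodule.mem_comap, LinearMap.sub_apply, LinearMap.smul_apply, hv,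
    Module.End.one_apply, ← sub_smul]
  rcases hj with rfl | hj
  · simp
  · exact smul_mem _ _ (subset_span ⟨j, hj, rfl⟩)

end EigenvectorSpan

section InnerProductSpace

variable {𝕜 E : Type*} [RCLike 𝕜] [NormedAddCommGroup E] [InnerProductSpace 𝕜 E]

theorem norm_le_norm_add_of_inner_eq_zero {x y : E} (h : inner 𝕜 x y = 0) : ‖x‖ ≤ ‖x + y‖ := by
  have := norm_add_sq_eq_norm_sq_add_norm_sq_of_inner_eq_zero x y h
  nlinarith [norm_nonneg x, norm_nonneg (x + y)]

variable {f : E →L[𝕜] E} {v : ℕ → E} {μ : ℕ → 𝕜}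

theorem norm_eigenvalue_le_norm_sub_apply_gramSchmidtNormed (hli : LinearIndependent 𝕜 v)
    (hv : ∀ n, f (v n) = μ n • v n) {m n : ℕ} (hnm : n < m) :
    ‖μ m‖ ≤ ‖f (gramSchmidtNormed 𝕜 v m) - f (gramSchmidtNormed 𝕜 v n)‖ := by
  set u := gramSchmidtNormed 𝕜 v
  have hspan : span 𝕜 (u '' Set.Iio m) = span 𝕜 (v '' Set.Iio m) := by
    rw [span_gramSchmidtNormed, span_gramSchmidt_Iio]
  have hum : u m ∈ span 𝕜 (v '' insert m (Set.Iio m)) := by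
    rw [Set.Iio_insert, ← span_gramSchmidt_Iic, ← span_gramSchmidtNormed]
    exact subset_span ⟨m, Set.self_mem_Iic, rfl⟩
  have hun : u n ∈ span 𝕜 (v '' Set.Iio m) := by
    rw [← hspan]; exact subset_span ⟨n, hnm, rfl⟩
  have horth : span 𝕜 (v '' Set.Iio m) ≤ (𝕜 ∙ u m)ᗮ := by
    rw [← hspan, span_le]
    rintro _ ⟨k, hk, rfl⟩
    exact mem_orthogonal_singleton_iff_inner_right.2
      ((gramSchmidtNormed_orthonormal hli).2 (ne_of_gt hk))
  have hz : f (u m) - μ m • u m - f (u n) ∈ span 𝕜 (v '' Set.Iio m) :=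
    sub_mem (apply_sub_smul_mem_span_image_of_mem_span_image_insert (f := f.toLinearMap) hv hum)
      (span_image_le_comap_of_apply_eq_smul (f := f.toLinearMap) hv _ hun)
  calc
    ‖μ m‖ = ‖μ m • u m‖ := by rw [norm_smul, gramSchmidtNormed_unit_length _ hli, mul_one]
    _ ≤ ‖μ m • u m + (f (u m) - μ m • u m - f (u n))‖ := by
      refine norm_le_norm_add_of_inner_eq_zero (𝕜 := 𝕜) ?_
      rw [inner_smul_left, mem_orthogonal_singleton_iff_inner_right.1 (horth hz), mul_zero]
    _ = ‖f (u m) - f (u n)‖ := by congr 1; abel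

theorem IsCompactOperator.tendsto_zero_of_linearIndependent_eigenvectors
    (hf : IsCompactOperator f) (hli : LinearIndependent 𝕜 v) (hv : ∀ n, f (v n) = μ n • v n) :
    Tendsto μ atTop (𝓝 0) := by
  by_contra h
  simp only [Metric.tendsto_nhds, not_forall, not_eventually, dist_zero_right, not_lt] at h
  obtain ⟨ε, hε, hfreq⟩ := h
  obtain ⟨φ, hφ, hφε⟩ := extraction_of_frequently_atTop hfreq
  have hliφ := hli.comp φ hφ.injective
  set u := gramSchmidtNormed 𝕜 (v ∘ φ)
  have hmem (k : ℕ) : f (u k) ∈ closure (f '' Metric.closedBall 0 1) :=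
    subset_closure ⟨u k, by simp [u, gramSchmidtNormed_unit_length _ hliφ], rfl⟩
  obtain ⟨y, -, ψ, hψ, hconv⟩ := (hf.isCompact_closure_image_closedBall 1).tendsto_subseq hmem
  obtain ⟨N, hN⟩ := Metric.cauchySeq_iff'.1 hconv.cauchySeq ε hε
  have hsep := norm_eigenvalue_le_norm_sub_apply_gramSchmidtNormed hliφ (fun n => hv (φ n))
    (hψ (Nat.lt_succ_self N))
  have hclose := hN (N + 1) N.le_succ
  simp only [Function.comp_apply, dist_eq_norm] at hclose
  linarith [hφε (ψ (N + 1))]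

end InnerProductSpace

theorem eigenvalue_accumulation_of_polynomially_compact_general
    {H : Type*} [NormedAddCommGroup H] [InnerProductSpace ℂ H]
    (T : H →L[ℂ] H) (c : ℝ)
    (hcpt : IsCompactOperator
      ⇑(T ^ 3 - ((c : ℂ) ^ 2) • T))
    (lam : ℕ → ℂ) (hdist : Function.Injective lam)
    (heig : ∀ n, ∃ v : H, v ≠ 0 ∧ T v = lam n • v)
    (l : ℂ) (hlim : Filter.Tendsto lam Filter.atTop (nhds l)) :
    l ∈ ({(0 : ℂ), (c : ℂ), (-c : ℂ)} : Set ℂ) := by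
  choose v hv0 hv using heig
  have hli : LinearIndependent ℂ v :=
    Module.End.eigenvectors_linearIndependent' (T : H →ₗ[ℂ] H) lam hdist v
      fun n => ⟨Module.End.mem_eigenspace_iff.2 (hv n), hv0 n⟩
  have hpv (n : ℕ) : (T ^ 3 - ((c : ℂ) ^ 2) • T) (v n) =
      (lam n ^ 3 - (c : ℂ) ^ 2 * lam n) • v n := by
    simp [pow_succ, hv, smul_smul, sub_smul, mul_assoc]
  have hp : l ^ 3 - (c : ℂ) ^ 2 * l = 0 :=
    tendsto_nhds_unique ((hlim.pow 3).sub (tendsto_const_nhds.mul hlim))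
      (hcpt.tendsto_zero_of_linearIndependent_eigenvectors hli hpv)
  have hfactor : l * (l - c) * (l + c) = 0 := by linear_combination hp
  simpa [sub_eq_zero, add_eq_zero_iff_eq_neg, or_assoc] using hfactor

theorem eigenvalue_accumulation_of_polynomially_compact
    {H : Type*} [NormedAddCommGroup H] [InnerProductSpace ℂ H] [CompleteSpace H]
    (T : H →L[ℂ] H) (c : ℝ) (hc : 0 < c)
    (hcpt : IsCompactOperator
      ⇑(T ^ 3 - ((c : ℂ) ^ 2) • T))
    (lam : ℕ → ℂ) (hdist : Function.Injective lam)
    (heig : ∀ n, ∃ v : H, v ≠ 0 ∧ T v = lam n • v)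
    (l : ℂ) (hlim : Filter.Tendsto lam Filter.atTop (nhds l)) :
    l ∈ ({(0 : ℂ), (c : ℂ), (-c : ℂ)} : Set ℂ) :=
  eigenvalue_accumulation_of_polynomially_compact_general T c hcpt lam hdist heig l hlim
end

section
/- Suppose K'² = NS + (1/4)I where N, S are bounded operators and suppose the essential spectrum of K' is {0, c, −c} with 0 < c < 1/2. Then for any real η ≠ 0, the essential spectrum of the operator iη((1/2)I − K') + NS is contained in {−1/4 + iη/2, −1/4 + c² + iη(1/2 − c), −1/4 + c² + iη(1/2 + c)}, and in particular 0 is not in the essential spectrum; hence iη((1/2)I − K') + NS is a Fredholm operator. -/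
/-- A continuous linear endomorphism is Fredholm if it has finite-dimensional kernel
and finite-codimensional range. -/
def IsFredholm {H : Type*} [NormedAddCommGroup H] [InnerProductSpace ℂ H]
    (T : H →L[ℂ] H) : Prop :=
  FiniteDimensional ℂ (LinearMap.ker (T : H →ₗ[ℂ] H)) ∧
  FiniteDimensional ℂ (H ⧸ LinearMap.range (T : H →ₗ[ℂ] H))

/-- The essential spectrum: the set of λ such that T − λI is not Fredholm. -/
def essSpectrum {H : Type*} [NormedAddCommGroup H] [InnerProductSpace ℂ H]
    (T : H →L[ℂ] H) : Set ℂ :=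
  {z : ℂ | ¬ IsFredholm (T - z • (1 : H →L[ℂ] H))}

open LinearMap

lemma fd_of_submodule_quotient {V : Type*} [AddCommGroup V] [Module ℂ V]
    (S : Submodule ℂ V) (h1 : FiniteDimensional ℂ S) (h2 : FiniteDimensional ℂ (V ⧸ S)) :
    FiniteDimensional ℂ V :=
  IsNoetherian.iff_fg.mp <| (isNoetherian_iff_submodule_quotient S).mpr
    ⟨IsNoetherian.iff_fg.mpr h1, IsNoetherian.iff_fg.mpr h2⟩

lemma fd_of_ker_range {V W : Type*} [AddCommGroup V] [Module ℂ V] [AddCommGroup W] [Module ℂ W]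
    (f : V →ₗ[ℂ] W) (h1 : FiniteDimensional ℂ (ker f)) (h2 : FiniteDimensional ℂ (range f)) :
    FiniteDimensional ℂ V := by
  have hq : FiniteDimensional ℂ (V ⧸ ker f) := f.quotKerEquivRange.symm.finiteDimensional
  exact fd_of_submodule_quotient (ker f) h1 hq

lemma IsFredholm.comp {H : Type*} [NormedAddCommGroup H] [InnerProductSpace ℂ H]
    {T U : H →L[ℂ] H} (hT : IsFredholm T) (hU : IsFredholm U) :
    IsFredholm (T * U) := by
  obtain ⟨hTk, hTr⟩ := hT
  obtain ⟨hUk, hUr⟩ := hU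
  set f := (T : H →ₗ[ℂ] H) with hf
  set g := (U : H →ₗ[ℂ] H) with hg
  have hfg : ((T * U : H →L[ℂ] H) : H →ₗ[ℂ] H) = f ∘ₗ g := rfl
  rw [IsFredholm, hfg]
  constructor
  · -- kernel of the composition is finite-dimensional
    have hres : ∀ x ∈ ker (f ∘ₗ g), g x ∈ ker f := fun x hx => hx
    set φ : ker (f ∘ₗ g) →ₗ[ℂ] ker f := g.restrict hres with hφ
    have hkφ : FiniteDimensional ℂ (ker φ) := by
      let j : (ker φ : Submodule ℂ (ker (f ∘ₗ g))) →ₗ[ℂ] H :=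
        (ker (f ∘ₗ g)).subtype ∘ₗ (ker φ).subtype
      have hj : ∀ x, j x ∈ ker g := by
        intro x
        have hx : φ x.1 = 0 := x.2
        have : g (x.1 : H) = 0 := congrArg Subtype.val hx
        exact this
      have hinj : Function.Injective (codRestrict (ker g) j hj) := by
        rw [← ker_eq_bot, ker_codRestrict, ker_eq_bot]
        exact (ker (f ∘ₗ g)).injective_subtype.comp (ker φ).injective_subtype
      exact FiniteDimensional.of_injective (codRestrict (ker g) j hj) hinj
    exact fd_of_ker_range φ hkφ inferInstance
  · -- cokernel of the composition is finite-dimensional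
    set R := range (f ∘ₗ g) with hR
    have hle : R ≤ range f := range_comp_le_range g f
    have hle' : R ≤ Submodule.comap LinearMap.id (range f) := hle
    set q2 : (H ⧸ R) →ₗ[ℂ] (H ⧸ range f) := Submodule.mapQ R (range f) LinearMap.id hle'
    -- the induced map from H ⧸ range g onto (range f)'s image in H ⧸ R
    have hg_ker : range g ≤ ker (R.mkQ ∘ₗ f) := by
      rintro x ⟨y, rfl⟩
      have : f (g y) ∈ R := ⟨y, rfl⟩
      simpa [Submodule.Quotient.mk_eq_zero] using (Submodule.Quotient.mk_eq_zero R).mpr this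
    set h : (H ⧸ range g) →ₗ[ℂ] (H ⧸ R) := Submodule.liftQ (range g) (R.mkQ ∘ₗ f) hg_ker
    have hkq2 : FiniteDimensional ℂ (ker q2) := by
      have hsub : ker q2 ≤ range h := by
        intro x hx
        obtain ⟨y, rfl⟩ := R.mkQ_surjective x
        have hy : y ∈ range f := by
          have : q2 (R.mkQ y) = 0 := hx
          simpa [q2, Submodule.mapQ_apply, Submodule.Quotient.mk_eq_zero] using this
        obtain ⟨z, rfl⟩ := hy
        exact ⟨Submodule.Quotient.mk z, by simp [h, Submodule.liftQ_apply]⟩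
      exact Submodule.finiteDimensional_of_le hsub
    exact fd_of_ker_range q2 hkq2 inferInstance

theorem regularized_operator_Fredholm
    {H : Type*} [NormedAddCommGroup H] [InnerProductSpace ℂ H] [CompleteSpace H]
    (K' N S : H →L[ℂ] H) (c η : ℝ) (hc0 : 0 < c) (hc : c < 1 / 2) (hη : η ≠ 0)
    (hNS : N * S = K' ^ 2 - (1 / 4 : ℂ) • (1 : H →L[ℂ] H))
    (hess : essSpectrum K' = ({(0 : ℂ), (c : ℂ), (-c : ℂ)} : Set ℂ)) :
    essSpectrum ((Complex.I * η) •
        ((1 / 2 : ℂ) • (1 : H →L[ℂ] H) - K') + N * S) ⊆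
      ({(-1 / 4 + Complex.I * η / 2 : ℂ),
        (-1 / 4 + (c : ℂ) ^ 2 + Complex.I * η * (1 / 2 - c) : ℂ),
        (-1 / 4 + (c : ℂ) ^ 2 + Complex.I * η * (1 / 2 + c) : ℂ)} : Set ℂ) ∧
    IsFredholm ((Complex.I * η) •
        ((1 / 2 : ℂ) • (1 : H →L[ℂ] H) - K') + N * S) := by
  set A : H →L[ℂ] H := (Complex.I * η) • ((1 / 2 : ℂ) • (1 : H →L[ℂ] H) - K') + N * S with hA
  set Λ : Set ℂ := ({(-1 / 4 + Complex.I * η / 2 : ℂ),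
        (-1 / 4 + (c : ℂ) ^ 2 + Complex.I * η * (1 / 2 - c) : ℂ),
        (-1 / 4 + (c : ℂ) ^ 2 + Complex.I * η * (1 / 2 + c) : ℂ)} : Set ℂ) with hΛ
  -- main claim: for w outside Λ, A - w is Fredholm
  have main : ∀ w : ℂ, w ∉ Λ → IsFredholm (A - w • (1 : H →L[ℂ] H)) := by
    intro w hw
    obtain ⟨d, hd⟩ := IsAlgClosed.exists_pow_nat_eq
      ((Complex.I * η) ^ 2 - 4 * (Complex.I * η / 2 - 1 / 4 - w)) (by norm_num : (0:ℕ) < 2)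
    set a : ℂ := (Complex.I * η + d) / 2 with ha
    set b : ℂ := (Complex.I * η - d) / 2 with hb
    have hab : a + b = Complex.I * η := by rw [ha, hb]; ring
    have habm : a * b = Complex.I * η / 2 - 1 / 4 - w := by
      rw [ha, hb]; linear_combination (-1 / 4 : ℂ) * hd
    -- if a (or b) were 0, c or -c, then w would lie in Λ
    have hq : ∀ z : ℂ, z + (Complex.I * η - z) = Complex.I * η := fun z => by ring
    have hwval : ∀ z : ℂ, z * (Complex.I * η - z) = Complex.I * η / 2 - 1 / 4 - w →
        w = z ^ 2 - Complex.I * η * z + Complex.I * η / 2 - 1 / 4 := by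
      intro z hz; linear_combination hz
    have hwa : w = a ^ 2 - Complex.I * η * a + Complex.I * η / 2 - 1 / 4 := by
      apply hwval; rw [show Complex.I * η - a = b by rw [← hab]; ring]; exact habm
    have hwb : w = b ^ 2 - Complex.I * η * b + Complex.I * η / 2 - 1 / 4 := by
      apply hwval; rw [show Complex.I * η - b = a by rw [← hab]; ring]
      rw [mul_comm]; exact habm
    have hnotmem : ∀ z : ℂ, w = z ^ 2 - Complex.I * η * z + Complex.I * η / 2 - 1 / 4 →
        z ∉ essSpectrum K' := by
      intro z hz hzmem
      rw [hess] at hzmem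
      simp only [Set.mem_insert_iff, Set.mem_singleton_iff] at hzmem
      apply hw
      simp only [hΛ, Set.mem_insert_iff, Set.mem_singleton_iff]
      rcases hzmem with h0 | h1 | h2
      · left; rw [hz, h0]; ring
      · right; left; rw [hz, h1]; ring
      · right; right; rw [hz, h2]; ring
    have hKa : IsFredholm (K' - a • (1 : H →L[ℂ] H)) := by
      have := hnotmem a hwa
      simpa [essSpectrum, not_not] using this
    have hKb : IsFredholm (K' - b • (1 : H →L[ℂ] H)) := by
      have := hnotmem b hwb
      simpa [essSpectrum, not_not] using this
    have key : A - w • (1 : H →L[ℂ] H)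
        = (K' - a • (1 : H →L[ℂ] H)) * (K' - b • (1 : H →L[ℂ] H)) := by
      rw [hA, hNS, sq]
      simp only [mul_sub, sub_mul, smul_mul_assoc, mul_smul_comm, one_mul, mul_one,
        smul_sub, smul_smul]
      match_scalars
      · linear_combination (1/4 : ℂ) * hd
      · linear_combination -hab
      · ring
    rw [key]
    exact hKa.comp hKb
  have hsub : essSpectrum A ⊆ Λ := by
    intro w hw
    by_contra hnot
    exact hw (main w hnot)
  refine ⟨hsub, ?_⟩
  have h0 : (0 : ℂ) ∉ Λ := by
    simp only [hΛ, Set.mem_insert_iff, Set.mem_singleton_iff, not_or]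
    refine ⟨fun h => ?_, fun h => ?_, fun h => ?_⟩ <;>
    · have him := congrArg Complex.im h
      simp [← Complex.ofReal_pow, mul_eq_zero] at him
      first
      | exact hη (by linarith)
      | (rcases him with him | him
         · exact hη him
         · linarith)
  have := main 0 h0
  simpa using this
end
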